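/- arXiv:2512.10022 — 7 statements merged into one kernel-verified Lean document; each statement's English description precedes it below -/
import Mathlib

section
/- Let K = (E, λ) dominate K₀ = (E₀, λ₀) (i.e., E₀ ⊆ E and λ₀(X) ≤ λ(X) for all X ⊆ E₀). If T₀ is a tangle of order k in K₀, then the collection T of all sets X ⊆ E with λ(X) < k and X ∩ E₀ ∈ T₀ is a tangle of order k in K. -/
open Set

variable {α : Type*} {V : Type*}

/-- An (unbundled) connectivity-system candidate: a ground set together with a
connectivity function on its subsets. -/
structure PreSys (α : Type*) where
  E : Set α
  lam : Set α → ℕ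

/-- `K` is a connectivity system: the ground set is finite and the connectivity
function is symmetric and submodular on subsets of the ground set. -/
def PreSys.IsConnSys (K : PreSys α) : Prop :=
  K.E.Finite ∧
  (∀ X ⊆ K.E, K.lam X = K.lam (K.E \ X)) ∧
  (∀ X ⊆ K.E, ∀ Y ⊆ K.E, K.lam (X ∩ Y) + K.lam (X ∪ Y) ≤ K.lam X + K.lam Y)

/-- A tangle of order `k` in a connectivity system. -/
def IsTangle (K : PreSys α) (k : ℕ) (T : Set (Set α)) : Prop :=
  (∀ A ∈ T, A ⊆ K.E ∧ K.lam A < k) ∧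
  (∀ A ⊆ K.E, K.lam A < k → (A ∈ T ↔ (K.E \ A) ∉ T)) ∧
  (∀ A ∈ T, ∀ B ∈ T, ∀ C ∈ T, A ∪ B ∪ C ≠ K.E) ∧
  (∀ A ∈ T, A.ncard ≠ K.E.ncard - 1)

/-- `K` dominates `K₀`. -/
def Dominates (K K₀ : PreSys α) : Prop :=
  K₀.E ⊆ K.E ∧ ∀ X ⊆ K₀.E, K₀.lam X ≤ K.lam X

/-- The collection of subsets of `K.E` of `K`-connectivity `< k` whose trace on
`K₀.E` lies in `T₀`; when `K` dominates `K₀` and `T₀` is a tangle, this is the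
tangle induced by `T₀` in `K`. -/
def InducedTangle (K K₀ : PreSys α) (k : ℕ) (T₀ : Set (Set α)) : Set (Set α) :=
  {X | X ⊆ K.E ∧ K.lam X < k ∧ X ∩ K₀.E ∈ T₀}

/-- `K₀` adheres to `K`. -/
def Adheres (K₀ K : PreSys α) : Prop :=
  Dominates K K₀ ∧
  ∀ A B : Set α, A ∪ B = K₀.E → Disjoint A B →
    ∃ X₁ X₂ : Set α, Disjoint X₁ X₂ ∧ (X₁ ∪ X₂ = A ∨ X₁ ∪ X₂ = B) ∧
      K.lam X₁ ≤ K₀.lam A ∧ K.lam X₂ ≤ K₀.lam A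

/-- The tangle `T` of order `k` in `K` splits in `K₀`: two distinct tangles of
order `k` in `K₀` both induce `T`. -/
def Splits (K K₀ : PreSys α) (k : ℕ) (T : Set (Set α)) : Prop :=
  ∃ T₁ T₂ : Set (Set α), T₁ ≠ T₂ ∧ IsTangle K₀ k T₁ ∧ IsTangle K₀ k T₂ ∧
    InducedTangle K K₀ k T₁ = T ∧ InducedTangle K K₀ k T₂ = T

/-- `K` is `k`-entangled: for each `t ≤ k` there is at most one tangle of order `t`. -/
def Entangled (K : PreSys α) (k : ℕ) : Prop :=
  ∀ t ≤ k, ∀ T₁ T₂ : Set (Set α), IsTangle K t T₁ → IsTangle K t T₂ → T₁ = T₂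

/-! ### Matroids -/

/-- The rank of a set in a matroid: the largest cardinality of an independent
subset of `X`. -/
noncomputable def mrank (M : Matroid α) (X : Set α) : ℕ :=
  sSup {n | ∃ I, M.Indep I ∧ I ⊆ X ∧ I.ncard = n}

/-- The connectivity function `λ_M(X) = r(X) + r(E \ X) - r(M) + 1` of a matroid. -/
noncomputable def lamM (M : Matroid α) (X : Set α) : ℕ :=
  mrank M X + mrank M (M.E \ X) - mrank M M.E + 1

/-- The connectivity function of the deletion `M \ e`, expressed via the rank
function of `M` (for `X ⊆ E(M) \ {e}` one has `r_{M\e}(X) = r_M(X)`). -/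
noncomputable def lamDel (M : Matroid α) (e : α) (X : Set α) : ℕ :=
  mrank M X + mrank M ((M.E \ {e}) \ X) - mrank M (M.E \ {e}) + 1

/-- The connectivity function of the contraction `M / e`, expressed via the rank
function of `M` (for `Y ⊆ E(M) \ {e}` one has `r_{M/e}(Y) = r_M(Y ∪ {e}) - r_M({e})`,
and `r(M/e) = r(M) - r_M({e})`). -/
noncomputable def lamCon (M : Matroid α) (e : α) (X : Set α) : ℕ :=
  mrank M (X ∪ {e}) + mrank M (((M.E \ {e}) \ X) ∪ {e}) - mrank M {e} - mrank M M.E + 1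

/-- The connectivity system `K(M)` of a matroid `M`. -/
noncomputable def KM (M : Matroid α) : PreSys α := ⟨M.E, lamM M⟩

/-- The connectivity system `K(M \ e)`. -/
noncomputable def KDel (M : Matroid α) (e : α) : PreSys α := ⟨M.E \ {e}, lamDel M e⟩

/-- The connectivity system `K(M / e)`. -/
noncomputable def KCon (M : Matroid α) (e : α) : PreSys α := ⟨M.E \ {e}, lamCon M e⟩

/-! ### Graphs, cut-rank and pivoting -/

/-- The cut-rank, relative to a ground set `S` of vertices, of a set `X`:
the GF(2)-rank of the adjacency submatrix with rows `X ∩ S` and columns `S \ X`.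
For an induced subgraph of `G` on `S` this is its cut-rank function. -/
noncomputable def cutRankOn (G : SimpleGraph V) [Fintype V] (S X : Set V) : ℕ :=
  letI : Fintype ↥(X ∩ S) := (Set.toFinite _).fintype
  letI : Fintype ↥(S \ X) := (Set.toFinite _).fintype
  letI : DecidableRel G.Adj := Classical.decRel _
  Matrix.rank (Matrix.of fun (a : ↥(X ∩ S)) (b : ↥(S \ X)) =>
    if G.Adj a.1 b.1 then (1 : ZMod 2) else 0)

/-- The cut-rank function `ρ_G` of a graph `G`. -/
noncomputable def cutRank (G : SimpleGraph V) [Fintype V] (X : Set V) : ℕ :=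
  cutRankOn G Set.univ X

/-- Local complementation at a vertex `v`: adjacency among the neighbours of `v`
is complemented. -/
def localComp (G : SimpleGraph V) (v : V) : SimpleGraph V where
  Adj a b := a ≠ b ∧
    ((G.Adj v a ∧ G.Adj v b ∧ ¬ G.Adj a b) ∨ (¬ (G.Adj v a ∧ G.Adj v b) ∧ G.Adj a b))
  symm := by
    constructor
    intro a b h
    obtain ⟨hab, h⟩ := h
    refine ⟨hab.symm, ?_⟩
    rcases h with ⟨h1, h2, h3⟩ | ⟨h1, h2⟩
    · exact Or.inl ⟨h2, h1, fun h => h3 h.symm⟩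
    · exact Or.inr ⟨fun h => h1 ⟨h.2, h.1⟩, h2.symm⟩
  loopless := ⟨fun a h => h.1 rfl⟩

/-- The pivot `G × e` on an edge `e = uv`, defined as `G * u * v * u` where `*`
denotes local complementation. -/
def pivot (G : SimpleGraph V) (u v : V) : SimpleGraph V :=
  localComp (localComp (localComp G u) v) u

/-- The connectivity system `CR(G) = (V(G), ρ_G)`. -/
noncomputable def CR (G : SimpleGraph V) [Fintype V] : PreSys V :=
  ⟨Set.univ, cutRank G⟩

/-- The connectivity system `CR(G - v)` of the graph obtained by deleting the
vertex `v`: ground set `V \ {v}` with the cut-rank computed inside `V \ {v}`. -/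
noncomputable def CRdel (G : SimpleGraph V) [Fintype V] (v : V) : PreSys V :=
  ⟨{v}ᶜ, cutRankOn G {v}ᶜ⟩

/-! ### Partial branch-decompositions -/

/-- A partial branch-decomposition of a connectivity system `K`: a cubic tree
(each vertex of degree 1 or 3) together with a map from the ground set to the
leaves of the tree. -/
structure PBD (K : PreSys α) (V : Type*) where
  tree : SimpleGraph V
  isTree : tree.IsTree
  cubic : ∀ x : V, (tree.neighborSet x).ncard = 1 ∨ (tree.neighborSet x).ncard = 3
  f : α → V
  maps : ∀ a ∈ K.E, (tree.neighborSet (f a)).ncard = 1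

/-- A leaf of the cubic tree of a partial branch-decomposition. -/
def PBD.IsLeaf {K : PreSys α} (D : PBD K V) (x : V) : Prop :=
  (D.tree.neighborSet x).ncard = 1

/-- The side of the edge `uw` of the tree `tr` towards `u`: the elements of the
ground set mapped by `f` into the component of `tr - uw` containing `u`. -/
def edgeSide (K : PreSys α) (tr : SimpleGraph V) (f : α → V) (u w : V) : Set α :=
  {a | a ∈ K.E ∧ (tr.deleteEdges {s(u, w)}).Reachable (f a) u}

/-- The partial branch-decomposition data `(tr, f)` has width at most `t`:
every edge of the tree induces a partition whose sides have connectivity at most `t`. -/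
def widthLE (K : PreSys α) (tr : SimpleGraph V) (f : α → V) (t : ℕ) : Prop :=
  ∀ u w : V, tr.Adj u w → K.lam (edgeSide K tr f u w) ≤ t

/-- The set displayed by the vertex `x`: the elements of the ground set mapped to `x`. -/
def display (K : PreSys α) (f : α → V) (x : V) : Set α :=
  {a | a ∈ K.E ∧ f a = x}

/-- `X` is weakly `t`-branched: `λ(X) ≤ t` and there is a partial
branch-decomposition of width at most `t` in which every leaf displays a subset
of `E \ X` or a singleton. -/
def WeaklyBranched (K : PreSys α) (X : Set α) (t : ℕ) : Prop :=
  K.lam X ≤ t ∧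
    ∃ (V : Type) (_ : Fintype V) (D : PBD K V), widthLE K D.tree D.f t ∧
      ∀ x : V, D.IsLeaf x →
        (display K D.f x ⊆ K.E \ X ∨ ∃ a : α, display K D.f x = {a})

/-- `X` is `t`-branched: there is a partial branch-decomposition of width at most
`t` in which some leaf displays `E \ X` and every other leaf displays at most one
element of `X`. -/
def Branched (K : PreSys α) (X : Set α) (t : ℕ) : Prop :=
  ∃ (V : Type) (_ : Fintype V) (D : PBD K V), widthLE K D.tree D.f t ∧
    ∃ r : V, D.IsLeaf r ∧ display K D.f r = K.E \ X ∧
      ∀ x : V, D.IsLeaf x → x ≠ r → (display K D.f x ∩ X).ncard ≤ 1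

/-- `κ_K(X, Y)`: the minimum connectivity of a set `Z` with `X ⊆ Z ⊆ E \ Y`. -/
noncomputable def kappa (K : PreSys α) (X Y : Set α) : ℕ :=
  sInf {n | ∃ Z : Set α, X ⊆ Z ∧ Z ⊆ K.E \ Y ∧ K.lam Z = n}

/-! The trace `X ∩ E₀` of a set of connectivity `< k` in `K` has connectivity `< k` in `K₀`:
either `X ⊆ E₀`, and domination applies, or `X` contains the unique element outside `E₀`,
and domination applies to `E \ X ⊆ E₀`, whose complement in `E₀` is the trace. The
remaining tangle axioms pass to traces because `X ↦ X ∩ E₀` preserves unions and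
complements and changes cardinalities by at most one. -/

theorem IsTangle.ground_notMem {K : PreSys α} {k : ℕ} {T : Set (Set α)}
    (hT : IsTangle K k T) : K.E ∉ T :=
  fun h => hT.2.2.1 _ h _ h _ h (by simp)

theorem Set.inter_eq_or_ncard_inter_eq_of_ncard_eq_sub_one {A E E₀ : Set α} (hE : E.Finite)
    (hA : A ⊆ E) (hAcard : A.ncard = E.ncard - 1) (hE₀ : E₀ ⊆ E) :
    A ∩ E₀ = E₀ ∨ (A ∩ E₀).ncard = E₀.ncard - 1 := by
  have hE₀fin : E₀.Finite := hE.subset hE₀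
  have hmissing : (E₀ \ (A ∩ E₀)).ncard ≤ 1 :=
    calc (E₀ \ (A ∩ E₀)).ncard ≤ (E \ A).ncard :=
          ncard_le_ncard (fun x hx => ⟨hE₀ hx.1, fun hxA => hx.2 ⟨hxA, hx.1⟩⟩) hE.sdiff
      _ = E.ncard - A.ncard := ncard_sdiff hA (hE.subset hA)
      _ ≤ 1 := by omega
  have hsplit := ncard_sdiff_add_ncard_of_subset (inter_subset_right : A ∩ E₀ ⊆ E₀) hE₀fin
  rcases Nat.le_one_iff_eq_zero_or_eq_one.mp hmissing with h | h
  · rw [ncard_eq_zero (hE₀fin.subset sdiff_subset), sdiff_eq_empty] at h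
    exact Or.inl (inter_subset_right.antisymm h)
  · exact Or.inr (by omega)

section InducedTangle

variable {K K₀ : PreSys α} {k : ℕ} {T₀ : Set (Set α)}

theorem lam_inter_le_of_dominates (hsym : ∀ X ⊆ K.E, K.lam X = K.lam (K.E \ X))
    (hsym₀ : ∀ X ⊆ K₀.E, K₀.lam X = K₀.lam (K₀.E \ X)) (hdom : Dominates K K₀)
    (hsub : (K.E \ K₀.E).Subsingleton) {A : Set α} (hA : A ⊆ K.E) :
    K₀.lam (A ∩ K₀.E) ≤ K.lam A := by
  by_cases hA₀ : A ⊆ K₀.E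
  · rw [inter_eq_left.mpr hA₀]
    exact hdom.2 A hA₀
  obtain ⟨a, haA, ha₀⟩ := not_subset.mp hA₀
  have hcompl : K.E \ A ⊆ K₀.E := fun b hb => by_contra fun hb₀ =>
    hb.2 (hsub ⟨hb.1, hb₀⟩ ⟨hA haA, ha₀⟩ ▸ haA)
  have htrace : A ∩ K₀.E = K₀.E \ (K.E \ A) := by
    ext x
    have := @hdom.1 x
    simp only [mem_inter_iff, mem_sdiff]
    tauto
  calc K₀.lam (A ∩ K₀.E) = K₀.lam (K₀.E \ (K.E \ A)) := by rw [htrace]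
    _ = K₀.lam (K.E \ A) := (hsym₀ _ hcompl).symm
    _ ≤ K.lam (K.E \ A) := hdom.2 _ hcompl
    _ = K.lam A := (hsym A hA).symm

theorem mem_inducedTangle_iff {A : Set α} (hA : A ⊆ K.E) (hlam : K.lam A < k) :
    A ∈ InducedTangle K K₀ k T₀ ↔ A ∩ K₀.E ∈ T₀ := by
  simp [InducedTangle, hA, hlam]

theorem mem_inducedTangle_iff_compl_notMem (hsym : ∀ X ⊆ K.E, K.lam X = K.lam (K.E \ X))
    (hsym₀ : ∀ X ⊆ K₀.E, K₀.lam X = K₀.lam (K₀.E \ X)) (hdom : Dominates K K₀)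
    (hsub : (K.E \ K₀.E).Subsingleton) (hT₀ : IsTangle K₀ k T₀) {A : Set α} (hA : A ⊆ K.E)
    (hlam : K.lam A < k) :
    A ∈ InducedTangle K K₀ k T₀ ↔ K.E \ A ∉ InducedTangle K K₀ k T₀ := by
  have hlamc : K.lam (K.E \ A) < k := hsym A hA ▸ hlam
  have htrace_compl : K₀.E \ (A ∩ K₀.E) = (K.E \ A) ∩ K₀.E := by
    rw [sdiff_inter_self_eq_sdiff, ← inter_sdiff_right_comm, inter_eq_right.mpr hdom.1]
  rw [mem_inducedTangle_iff hA hlam, mem_inducedTangle_iff sdiff_subset hlamc, ← htrace_compl]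
  exact hT₀.2.1 _ inter_subset_right
    ((lam_inter_le_of_dominates hsym hsym₀ hdom hsub hA).trans_lt hlam)

theorem union_union_ne_of_mem_inducedTangle (hE₀ : K₀.E ⊆ K.E) (hT₀ : IsTangle K₀ k T₀)
    {A B C : Set α} (hA : A ∈ InducedTangle K K₀ k T₀) (hB : B ∈ InducedTangle K K₀ k T₀)
    (hC : C ∈ InducedTangle K K₀ k T₀) : A ∪ B ∪ C ≠ K.E := by
  intro hunion
  refine hT₀.2.2.1 _ hA.2.2 _ hB.2.2 _ hC.2.2 ?_
  rw [← union_inter_distrib_right, ← union_inter_distrib_right, hunion, inter_eq_right.mpr hE₀]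

theorem ncard_ne_of_mem_inducedTangle (hfin : K.E.Finite) (hE₀ : K₀.E ⊆ K.E)
    (hT₀ : IsTangle K₀ k T₀) {A : Set α} (hA : A ∈ InducedTangle K K₀ k T₀) :
    A.ncard ≠ K.E.ncard - 1 := by
  intro hcard
  rcases inter_eq_or_ncard_inter_eq_of_ncard_eq_sub_one hfin hA.1 hcard hE₀ with h | h
  · exact hT₀.ground_notMem (h ▸ hA.2.2)
  · exact hT₀.2.2.2 _ hA.2.2 h

end InducedTangle

theorem stmt1_general {α : Type*} (K K₀ : PreSys α) (hK : K.IsConnSys) (hK₀ : K₀.IsConnSys)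
    (e : α) (hE : K₀.E = K.E \ {e})
    (hdom : Dominates K K₀) (k : ℕ) (T₀ : Set (Set α)) (hT₀ : IsTangle K₀ k T₀) :
    IsTangle K k (InducedTangle K K₀ k T₀) := by
  have hsub : (K.E \ K₀.E).Subsingleton := by
    rw [hE, sdiff_sdiff_right_self]
    exact subsingleton_singleton.anti inter_subset_right
  refine ⟨fun A hA => ⟨hA.1, hA.2.1⟩, fun A hA hlam => ?_,
    fun A hA B hB C hC => union_union_ne_of_mem_inducedTangle hdom.1 hT₀ hA hB hC,
    fun A hA => ncard_ne_of_mem_inducedTangle hK.1 hdom.1 hT₀ hA⟩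
  exact mem_inducedTangle_iff_compl_notMem hK.2.1 hK₀.2.1 hdom hsub hT₀ hA hlam

/-- If `K` dominates `K₀` (here, as in the application, the ground set of
`K₀` is obtained from that of `K` by removing a single element `e`) and `T₀` is a
tangle of order `k` in `K₀`, then the collection of all `X ⊆ E` with `λ(X) < k` and
`X ∩ E₀ ∈ T₀` is a tangle of order `k` in `K`. -/
theorem stmt1 {α : Type*} (K K₀ : PreSys α) (hK : K.IsConnSys) (hK₀ : K₀.IsConnSys)
    (e : α) (he : e ∈ K.E) (hE : K₀.E = K.E \ {e})
    (hdom : Dominates K K₀) (k : ℕ) (T₀ : Set (Set α)) (hT₀ : IsTangle K₀ k T₀) :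
    IsTangle K k (InducedTangle K K₀ k T₀) :=
  stmt1_general K K₀ hK hK₀ e hE hdom k T₀ hT₀
end

section
/- Let K₀ = (E₀, λ₀) adhere to K = (E, λ): K dominates K₀ and for each partition (A, B) of E₀ there is a partition (X₁, X₂) of A or of B with λ(X₁) ≤ λ₀(A) and λ(X₂) ≤ λ₀(A) (one of X₁, X₂ may be empty). Then no tangle of order k in K splits in K₀; that is, there do not exist two distinct tangles T₁, T₂ of order k in K₀ that both induce the same tangle T of order k in K. -/
open Set

variable {α : Type*} {V : Type*}

/-! Two tangles of `K₀` inducing the same tangle of `K` agree on every subset of `E₀` of small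
`K`-connectivity. If `A` lies in the first but not the second, adherence cuts `A` or `E₀ \ A`
into two pieces of small connectivity; as subsets of a member of one tangle they lie in it, hence
in the other one, where together with the complementary side they cover `E₀`. -/

namespace IsTangle

variable {K : PreSys α} {k : ℕ} {T : Set (Set α)} {A X : Set α}

lemma diff_notMem_of_subset (hT : IsTangle K k T) (hA : A ∈ T) (hXA : X ⊆ A) :
    K.E \ X ∉ T := fun hX ↦
  hT.2.2.1 A hA A hA (K.E \ X) hX <| by
    rw [union_self, union_sdiff_cancel' hXA (hT.1 A hA).1]

lemma mem_or_diff_mem (hT : IsTangle K k T) (hX : X ⊆ K.E) (hXk : K.lam X < k) :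
    X ∈ T ∨ K.E \ X ∈ T :=
  (em (K.E \ X ∈ T)).symm.imp_left (hT.2.1 X hX hXk).2

lemma mem_of_subset (hT : IsTangle K k T) (hA : A ∈ T) (hXA : X ⊆ A) (hXk : K.lam X < k) :
    X ∈ T :=
  (hT.2.1 X (hXA.trans (hT.1 A hA).1) hXk).2 (hT.diff_notMem_of_subset hA hXA)

end IsTangle

section Induced

variable {K K₀ : PreSys α} {k : ℕ} {T T₁ T₂ : Set (Set α)}

lemma mem_iff_mem_of_induce_eq (hT : IsTangle K k T) (hE : K₀.E ⊆ K.E)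
    (h₁ : IsTangle K₀ k T₁) (h₂ : IsTangle K₀ k T₂)
    (hi₁ : InducedTangle K K₀ k T₁ = T) (hi₂ : InducedTangle K K₀ k T₂ = T)
    {X : Set α} (hX : X ⊆ K₀.E) (hXk : K.lam X < k) : X ∈ T₁ ↔ X ∈ T₂ := by
  have trace_mem {T₀ : Set (Set α)} (hi : InducedTangle K K₀ k T₀ = T) {Y : Set α}
      (hY : Y ∈ T) : Y ∩ K₀.E ∈ T₀ := (hi ▸ hY).2.2
  rcases hT.mem_or_diff_mem (hX.trans hE) hXk with hXT | hXT
  · rw [← inter_eq_left.2 hX]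
    exact iff_of_true (trace_mem hi₁ hXT) (trace_mem hi₂ hXT)
  · have hXT₀ : K.E \ X ∩ K₀.E = K₀.E \ X := by
      rw [← inter_sdiff_right_comm, inter_eq_right.2 hE]
    refine iff_of_false (fun hX₁ ↦ ?_) (fun hX₂ ↦ ?_)
    · exact h₁.diff_notMem_of_subset hX₁ subset_rfl (hXT₀ ▸ trace_mem hi₁ hXT)
    · exact h₂.diff_notMem_of_subset hX₂ subset_rfl (hXT₀ ▸ trace_mem hi₂ hXT)

lemma false_of_union_eq_of_mem_of_diff_mem (hdom : ∀ X ⊆ K₀.E, K₀.lam X ≤ K.lam X)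
    {S S' : Set (Set α)} (hS : IsTangle K₀ k S) (hS' : IsTangle K₀ k S')
    (hSS' : ∀ X ⊆ K₀.E, K.lam X < k → X ∈ S → X ∈ S')
    {P X₁ X₂ : Set α} (hP : P ∈ S) (hP' : K₀.E \ P ∈ S') (hX : X₁ ∪ X₂ = P)
    (hX₁ : K.lam X₁ < k) (hX₂ : K.lam X₂ < k) : False := by
  have hPE := (hS.1 P hP).1
  have piece_mem {Y : Set α} (hYP : Y ⊆ P) (hY : K.lam Y < k) : Y ∈ S' :=
    hSS' Y (hYP.trans hPE) hY <|
      hS.mem_of_subset hP hYP ((hdom Y (hYP.trans hPE)).trans_lt hY)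
  refine hS'.2.2.1 X₁ (piece_mem (hX ▸ subset_union_left) hX₁)
    X₂ (piece_mem (hX ▸ subset_union_right) hX₂) _ hP' ?_
  rw [hX, union_sdiff_cancel hPE]

lemma subset_of_adheres_of_induce_eq (hadh : Adheres K₀ K) (hT : IsTangle K k T)
    (h₁ : IsTangle K₀ k T₁) (h₂ : IsTangle K₀ k T₂)
    (hi₁ : InducedTangle K K₀ k T₁ = T) (hi₂ : InducedTangle K K₀ k T₂ = T) :
    T₁ ⊆ T₂ := by
  obtain ⟨⟨hE, hdom⟩, hcut⟩ := hadh
  have agree {X : Set α} (hX : X ⊆ K₀.E) (hXk : K.lam X < k) : X ∈ T₁ ↔ X ∈ T₂ :=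
    mem_iff_mem_of_induce_eq hT hE h₁ h₂ hi₁ hi₂ hX hXk
  intro A hA₁
  by_contra hA₂
  obtain ⟨hAE, hAk⟩ := h₁.1 A hA₁
  have hB₂ : K₀.E \ A ∈ T₂ := (h₂.mem_or_diff_mem hAE hAk).resolve_left hA₂
  obtain ⟨X₁, X₂, -, hX | hX, hX₁, hX₂⟩ :=
    hcut A (K₀.E \ A) (union_sdiff_cancel hAE) disjoint_sdiff_right
  · exact false_of_union_eq_of_mem_of_diff_mem hdom h₁ h₂ (fun X hX hXk ↦ (agree hX hXk).1)
      hA₁ hB₂ hX (hX₁.trans_lt hAk) (hX₂.trans_lt hAk)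
  · exact false_of_union_eq_of_mem_of_diff_mem hdom h₂ h₁ (fun X hX hXk ↦ (agree hX hXk).2)
      hB₂ (by rwa [sdiff_sdiff_cancel_left hAE]) hX (hX₁.trans_lt hAk) (hX₂.trans_lt hAk)

end Induced

theorem stmt2_general {α : Type*} (K K₀ : PreSys α)
    (hadh : Adheres K₀ K) (k : ℕ) (T : Set (Set α)) (hT : IsTangle K k T) :
    ¬ Splits K K₀ k T := by
  rintro ⟨T₁, T₂, hne, h₁, h₂, hi₁, hi₂⟩
  exact hne <| (subset_of_adheres_of_induce_eq hadh hT h₁ h₂ hi₁ hi₂).antisymm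
    (subset_of_adheres_of_induce_eq hadh hT h₂ h₁ hi₂ hi₁)

/-- If `K₀` adheres to `K`, then no tangle of order `k` in `K`
splits in `K₀`. -/
theorem stmt2 {α : Type*} (K K₀ : PreSys α) (hK : K.IsConnSys) (hK₀ : K₀.IsConnSys)
    (hadh : Adheres K₀ K) (k : ℕ) (T : Set (Set α)) (hT : IsTangle K k T) :
    ¬ Splits K K₀ k T :=
  stmt2_general K K₀ hadh k T hT
end

section
/- For any element e of a matroid M, at least one of the connectivity systems K(M \ e) and K(M / e) adheres to K(M). That is, for at least one of N ∈ {M \ e, M / e}: for every partition (A, B) of E(M) \ {e}, there is a partition (X₁, X₂) of A or of B (possibly with one part empty) such that λ_M(X₁) ≤ λ_N(A) and λ_M(X₂) ≤ λ_N(A). -/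
open Set

variable {α : Type*} {V : Type*}

/-! If `K(M \ e)` does not adhere to `K(M)`, some partition `(A, B)` of `E(M) - e` witnesses it.
Given any partition `(C, D)`, the inequality
`λ_M(A ∩ C) + λ_M(B ∩ D) ≤ λ_{M\e}(A) + λ_{M/e}(C) + 1` (two applications of submodularity of
the rank) and its twin for `(A, D)` bound the four pieces `A ∩ C, …, B ∩ D`. As neither `A` nor
`B` splits cheaply along `(C, D)`, the two pieces inside `C` or the two inside `D` have
connectivity at most `λ_{M/e}(C)`, so `K(M / e)` adheres. -/

theorem adheres_or_adheres_of_crossing {K K₀ K₁ : PreSys α} (hE : K₁.E = K₀.E)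
    (h₀ : Dominates K K₀) (h₁ : Dominates K K₁)
    (hsymm : ∀ C ⊆ K₀.E, K₁.lam (K₀.E \ C) = K₁.lam C)
    (hcross : ∀ A ⊆ K₀.E, ∀ C ⊆ K₀.E,
      K.lam (A ∩ C) + K.lam ((K₀.E \ A) ∩ (K₀.E \ C)) ≤ K₀.lam A + K₁.lam C + 1) :
    Adheres K₀ K ∨ Adheres K₁ K := by
  refine or_iff_not_imp_left.2 fun h ↦ ⟨h₁, fun C D hCD hCD' ↦ ?_⟩
  obtain ⟨A, B, hAB, hAB', hfail⟩ : ∃ A B, A ∪ B = K₀.E ∧ Disjoint A B ∧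
      ∀ X₁ X₂, Disjoint X₁ X₂ → (X₁ ∪ X₂ = A ∨ X₁ ∪ X₂ = B) →
        K.lam X₁ ≤ K₀.lam A → K₀.lam A < K.lam X₂ := by
    simpa [Adheres, h₀] using h
  rw [hE] at hCD
  have hAE : A ⊆ K₀.E := hAB ▸ subset_union_left
  have hBE : B ⊆ K₀.E := hAB ▸ subset_union_right
  have hCE : C ⊆ K₀.E := hCD ▸ subset_union_left
  have hDE : D ⊆ K₀.E := hCD ▸ subset_union_right
  have hB : K₀.E \ A = B := hAB'.sdiff_eq_of_sup_eq hAB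
  have hD : K₀.E \ C = D := hCD'.sdiff_eq_of_sup_eq hCD
  have hC : K₀.E \ D = C := by rw [← hD, sdiff_sdiff_cancel_left hCE]
  have hcrossC := hcross A hAE C hCE
  have hcrossD := hcross A hAE D hDE
  rw [hB, hD] at hcrossC
  rw [hB, hC, ← hD, hsymm C hCE, hD] at hcrossD
  have hsplit : ∀ {P}, P ⊆ K₀.E → P ∩ C ∪ P ∩ D = P := fun hP ↦ by
    rw [← inter_union_distrib_left, hCD, inter_eq_left.2 hP]
  have hfailA := hfail (A ∩ C) (A ∩ D) (hCD'.mono inter_subset_right inter_subset_right)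
    (Or.inl (hsplit hAE))
  have hfailB := hfail (B ∩ C) (B ∩ D) (hCD'.mono inter_subset_right inter_subset_right)
    (Or.inr (hsplit hBE))
  have hcover : ∀ {P}, P ⊆ K₀.E → A ∩ P ∪ B ∩ P = P := fun hP ↦ by
    rw [← union_inter_distrib_right, hAB, inter_eq_right.2 hP]
  have hdisj : ∀ P, Disjoint (A ∩ P) (B ∩ P) := fun _ ↦
    hAB'.mono inter_subset_left inter_subset_left
  rcases (by omega : (K.lam (A ∩ C) ≤ K₁.lam C ∧ K.lam (B ∩ C) ≤ K₁.lam C) ∨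
      (K.lam (A ∩ D) ≤ K₁.lam C ∧ K.lam (B ∩ D) ≤ K₁.lam C)) with ⟨h₁, h₂⟩ | ⟨h₁, h₂⟩
  · exact ⟨A ∩ C, B ∩ C, hdisj C, Or.inl (hcover hCE), h₁, h₂⟩
  · exact ⟨A ∩ D, B ∩ D, hdisj D, Or.inr (hcover hDE), h₁, h₂⟩

section mrank

variable {M : Matroid α} [M.RankFinite] {I X Y Z W : Set α}

theorem mrank_eq_ncard (hI : M.IsBasis' I X) : mrank M X = I.ncard := by
  refine IsGreatest.csSup_eq ⟨⟨I, hI.indep, hI.subset, rfl⟩, ?_⟩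
  rintro _ ⟨J, hJ, hJX, rfl⟩
  rw [ncard_def, ncard_def]
  exact ENat.toNat_le_toNat (hI.encard_eq_eRk ▸ hJ.encard_le_eRk_of_subset hJX)
    hI.indep.finite.encard_lt_top.ne

theorem cast_mrank (M : Matroid α) [M.RankFinite] (X : Set α) :
    (mrank M X : ℕ∞) = M.eRk X := by
  obtain ⟨I, hI⟩ := M.exists_isBasis' X
  rw [mrank_eq_ncard hI, hI.indep.finite.cast_ncard_eq, hI.encard_eq_eRk]

theorem mrank_mono (h : X ⊆ Y) : mrank M X ≤ mrank M Y := by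
  exact_mod_cast (cast_mrank M X).trans_le ((M.eRk_mono h).trans_eq (cast_mrank M Y).symm)

theorem mrank_singleton_le_one (M : Matroid α) [M.RankFinite] (e : α) : mrank M {e} ≤ 1 := by
  exact_mod_cast (cast_mrank M {e}).trans_le
    ((M.eRk_le_encard {e}).trans_eq (encard_singleton e))

theorem mrank_inter_add_mrank_union_le (M : Matroid α) [M.RankFinite] (X Y : Set α) :
    mrank M (X ∩ Y) + mrank M (X ∪ Y) ≤ mrank M X + mrank M Y := by
  have := M.eRk_submod X Y
  simp only [← cast_mrank] at this
  exact_mod_cast this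

theorem mrank_add_mrank_le_of_subset (hZ : Z ⊆ X ∩ Y) (hW : W ⊆ X ∪ Y) :
    mrank M Z + mrank M W ≤ mrank M X + mrank M Y :=
  (add_le_add (mrank_mono hZ) (mrank_mono hW)).trans (mrank_inter_add_mrank_union_le M X Y)

theorem mrank_le_mrank_add_mrank_diff (M : Matroid α) [M.RankFinite] (S X : Set α) :
    mrank M S ≤ mrank M X + mrank M (S \ X) :=
  le_add_self.trans <| mrank_add_mrank_le_of_subset subset_rfl <| by
    rw [union_sdiff_self]; exact subset_union_right

end mrank

section connectivity

variable {M : Matroid α} {X : Set α} {e : α}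

theorem lamM_add_mrank_ground (M : Matroid α) [M.RankFinite] (X : Set α) :
    lamM M X + mrank M M.E = mrank M X + mrank M (M.E \ X) + 1 := by
  have := mrank_le_mrank_add_mrank_diff M M.E X
  unfold lamM
  omega

theorem lamDel_add_mrank_ground (M : Matroid α) [M.RankFinite] (e : α) (X : Set α) :
    lamDel M e X + mrank M (M.E \ {e}) = mrank M X + mrank M ((M.E \ {e}) \ X) + 1 := by
  have := mrank_le_mrank_add_mrank_diff M (M.E \ {e}) X
  unfold lamDel
  omega

theorem lamCon_add_mrank_ground (M : Matroid α) [M.RankFinite] (e : α) (X : Set α) :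
    lamCon M e X + mrank M {e} + mrank M M.E =
      mrank M (X ∪ {e}) + mrank M ((M.E \ {e}) \ X ∪ {e}) + 1 := by
  have : mrank M {e} + mrank M M.E ≤ mrank M (X ∪ {e}) + mrank M ((M.E \ {e}) \ X ∪ {e}) :=
    mrank_add_mrank_le_of_subset (by grind) (by grind)
  unfold lamCon
  omega

theorem lamDel_le_lamM [M.RankFinite] (heX : e ∉ X) : lamDel M e X ≤ lamM M X := by
  have : mrank M ((M.E \ {e}) \ X) + mrank M M.E ≤ mrank M (M.E \ X) + mrank M (M.E \ {e}) :=
    mrank_add_mrank_le_of_subset (by grind) (by grind)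
  have := lamDel_add_mrank_ground M e X
  have := lamM_add_mrank_ground M X
  omega

theorem lamCon_le_lamM [M.RankFinite] (he : e ∈ M.E) (heX : e ∉ X) :
    lamCon M e X ≤ lamM M X := by
  have := mrank_inter_add_mrank_union_le M X {e}
  have : mrank M ((M.E \ {e}) \ X ∪ {e}) ≤ mrank M (M.E \ X) := mrank_mono (by grind)
  have := lamCon_add_mrank_ground M e X
  have := lamM_add_mrank_ground M X
  omega

theorem lamCon_diff (hX : X ⊆ M.E \ {e}) : lamCon M e ((M.E \ {e}) \ X) = lamCon M e X := by
  simp only [lamCon, sdiff_sdiff_cancel_left hX]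
  omega

theorem lamM_inter_add_lamM_diff_inter_le (M : Matroid α) [M.RankFinite] (e : α) (A C : Set α) :
    lamM M (A ∩ C) + lamM M ((M.E \ {e}) \ A ∩ ((M.E \ {e}) \ C)) ≤
      lamDel M e A + lamCon M e C + 1 := by
  have hAC : mrank M (A ∩ C) + mrank M (M.E \ ((M.E \ {e}) \ A ∩ ((M.E \ {e}) \ C))) ≤
      mrank M A + mrank M (C ∪ {e}) :=
    mrank_add_mrank_le_of_subset (by grind) (by grind)
  have hAC' : mrank M ((M.E \ {e}) \ A ∩ ((M.E \ {e}) \ C)) + mrank M (M.E \ (A ∩ C)) ≤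
      mrank M ((M.E \ {e}) \ A) + mrank M ((M.E \ {e}) \ C ∪ {e}) :=
    mrank_add_mrank_le_of_subset (by grind) (by grind)
  have : mrank M (M.E \ {e}) ≤ mrank M M.E := mrank_mono sdiff_subset
  have := mrank_singleton_le_one M e
  have := lamM_add_mrank_ground M (A ∩ C)
  have := lamM_add_mrank_ground M ((M.E \ {e}) \ A ∩ ((M.E \ {e}) \ C))
  have := lamDel_add_mrank_ground M e A
  have := lamCon_add_mrank_ground M e C
  omega

end connectivity

/-- For any element `e` of a matroid `M`, at least one of `K(M \ e)`
and `K(M / e)` adheres to `K(M)`. -/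
theorem stmt4 {α : Type*} (M : Matroid α) [M.Finite] (e : α) (he : e ∈ M.E) :
    Adheres (KDel M e) (KM M) ∨ Adheres (KCon M e) (KM M) := by
  have notMem : ∀ {X}, X ⊆ M.E \ {e} → e ∉ X := fun hX h ↦ (hX h).2 rfl
  exact adheres_or_adheres_of_crossing rfl
    ⟨sdiff_subset, fun _ hX ↦ lamDel_le_lamM (notMem hX)⟩
    ⟨sdiff_subset, fun _ hX ↦ lamCon_le_lamM he (notMem hX)⟩
    (fun _ hC ↦ lamCon_diff hC) (fun A _ C _ ↦ lamM_inter_add_lamM_diff_inter_le M e A C)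
end

section
/- Let G be a simple graph with adjacency matrix A over GF(2), and for X ⊆ V(G) define the cut-rank ρ_G(X) as the GF(2)-rank of the submatrix A[X, V(G) \ X]. Then (V(G), ρ_G) is a connectivity system: ρ_G(X) = ρ_G(V(G) \ X) for all X, and ρ_G(X ∩ Y) + ρ_G(X ∪ Y) ≤ ρ_G(X) + ρ_G(Y) for all X, Y ⊆ V(G). -/
open Set

variable {α : Type*} {V : Type*}

/-! The cut-rank of `X` is the rank of the submatrix `A[X, Xᶜ]` of the symmetric adjacency
matrix, so symmetry is invariance of rank under transposition. Submodularity holds for submatrix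
ranks of any matrix `M`: if `K_C` is the space of functions vanishing on the column set `C`, then
`rank M[R, C] = dim (⟨rows in R⟩ + K_C) - dim K_C`. Since `K_{C ∪ C'} = K_C ∩ K_{C'}` and
`K_{C ∩ C'} = K_C + K_{C'}`, the inequality
`rank M[R ∩ R', C ∪ C'] + rank M[R ∪ R', C ∩ C'] ≤ rank M[R, C] + rank M[R', C']`
follows from the modular law `dim (U + U') + dim (U ∩ U') = dim U + dim U'` applied to
`U = ⟨rows in R⟩ + K_C` and `U' = ⟨rows in R'⟩ + K_{C'}`. Taking `R = X`, `R' = Y`, `C = Xᶜ`,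
`C' = Yᶜ` gives submodularity of the cut-rank. -/

open Module Submodule

namespace LinearMap

variable {R M n : Type*} [Semiring R] [AddCommMonoid M] [Module R M]

theorem mem_ker_funLeft_val {C : Set n} {f : n → M} :
    f ∈ ker (funLeft R M ((↑) : C → n)) ↔ ∀ j ∈ C, f j = 0 := by
  simp [funext_iff]

theorem ker_funLeft_union (C D : Set n) :
    ker (funLeft R M ((↑) : ↥(C ∪ D) → n))
      = ker (funLeft R M ((↑) : C → n)) ⊓ ker (funLeft R M ((↑) : D → n)) := by
  ext f
  simp only [mem_inf, mem_ker_funLeft_val, Set.mem_union, or_imp, forall_and]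

theorem ker_funLeft_inter (C D : Set n) :
    ker (funLeft R M ((↑) : ↥(C ∩ D) → n))
      = ker (funLeft R M ((↑) : C → n)) ⊔ ker (funLeft R M ((↑) : D → n)) := by
  refine le_antisymm (fun f hf => ?_) (sup_le ?_ ?_)
  · rw [mem_ker_funLeft_val] at hf
    rw [← Cᶜ.indicator_self_add_compl f, compl_compl]
    refine add_mem_sup (mem_ker_funLeft_val.2 fun j hj => by simp [hj])
      (mem_ker_funLeft_val.2 fun j hj => ?_)
    by_cases hjC : j ∈ C
    · simp [hjC, hf j ⟨hjC, hj⟩]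
    · simp [hjC]
  · exact fun f hf => mem_ker_funLeft_val.2 fun j hj => mem_ker_funLeft_val.1 hf j hj.1
  · exact fun f hf => mem_ker_funLeft_val.2 fun j hj => mem_ker_funLeft_val.1 hf j hj.2

end LinearMap

theorem Submodule.finrank_map_add_finrank_ker {K M N : Type*} [DivisionRing K] [AddCommGroup M]
    [Module K M] [AddCommGroup N] [Module K N] [FiniteDimensional K M] (f : M →ₗ[K] N)
    (p : Submodule K M) :
    finrank K (p.map f) + finrank K (LinearMap.ker f) = finrank K ↥(p ⊔ LinearMap.ker f) := by
  have h_map : (p ⊔ LinearMap.ker f).map f = p.map f := by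
    rw [map_sup, LinearMap.le_ker_iff_map.mp le_rfl, sup_bot_eq]
  have h := LinearMap.finrank_range_add_finrank_ker (f.domRestrict (p ⊔ LinearMap.ker f))
  rwa [LinearMap.range_domRestrict, h_map, LinearMap.ker_domRestrict,
    LinearEquiv.finrank_eq (comapSubtypeEquivOfLe le_sup_right)] at h

namespace Matrix

variable {m n F : Type*} [Field F]

noncomputable def rankOn (M : Matrix m n F) (R : Set m) (C : Set n) : ℕ :=
  finrank F ((span F (M.row '' R)).map (LinearMap.funLeft F F ((↑) : C → n)))

theorem rank_submatrix_eq_rankOn (M : Matrix m n F) (R : Set m) (C : Set n) [Finite R]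
    [Fintype C] : (M.submatrix ((↑) : R → m) ((↑) : C → n)).rank = M.rankOn R C := by
  rw [rank_eq_finrank_span_row, rankOn, map_span, Set.image_image, Set.image_eq_range]
  rfl

section Submodular

variable [Finite n] (M : Matrix m n F)

-- `K C` is the space of functions vanishing on `C`.
local notation "K" C => LinearMap.ker (LinearMap.funLeft F F ((↑) : ↥C → n))

theorem rankOn_add_finrank_ker (R : Set m) (C : Set n) :
    M.rankOn R C + finrank F (K C) = finrank F ↥(span F (M.row '' R) ⊔ K C) :=
  finrank_map_add_finrank_ker _ _

theorem rankOn_inter_union_add_le (R R' : Set m) (C C' : Set n) :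
    M.rankOn (R ∩ R') (C ∪ C') + M.rankOn (R ∪ R') (C ∩ C') ≤ M.rankOn R C + M.rankOn R' C' := by
  have hU := M.rankOn_add_finrank_ker R C
  have hU' := M.rankOn_add_finrank_ker R' C'
  set U := span F (M.row '' R) ⊔ K C
  set U' := span F (M.row '' R') ⊔ K C'
  have h_inter : M.rankOn (R ∩ R') (C ∪ C') + finrank F ↥((K C) ⊓ K C')
      = finrank F ↥(span F (M.row '' (R ∩ R')) ⊔ ((K C) ⊓ K C')) := by
    rw [← LinearMap.ker_funLeft_union]
    exact M.rankOn_add_finrank_ker _ _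
  have h_union : M.rankOn (R ∪ R') (C ∩ C') + finrank F ↥((K C) ⊔ K C')
      = finrank F ↥(U ⊔ U') := by
    rw [← LinearMap.ker_funLeft_inter, M.rankOn_add_finrank_ker, Set.image_union, span_union,
      LinearMap.ker_funLeft_inter, sup_sup_sup_comm]
  have h_le : span F (M.row '' (R ∩ R')) ⊔ ((K C) ⊓ K C') ≤ U ⊓ U' :=
    sup_le (le_inf (le_sup_of_le_left (span_mono (Set.image_mono Set.inter_subset_left)))
        (le_sup_of_le_left (span_mono (Set.image_mono Set.inter_subset_right))))
      (le_inf (inf_le_left.trans le_sup_right) (inf_le_right.trans le_sup_right))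
  have h_mod := finrank_sup_add_finrank_inf_eq U U'
  have h_mod_ker := finrank_sup_add_finrank_inf_eq (K C) (K C')
  have := finrank_mono h_le
  omega

end Submodular

theorem rankOn_transpose [Finite m] [Finite n] (M : Matrix m n F) (R : Set m) (C : Set n) :
    Mᵀ.rankOn C R = M.rankOn R C := by
  have := Fintype.ofFinite R
  have := Fintype.ofFinite C
  rw [← rank_submatrix_eq_rankOn, ← rank_submatrix_eq_rankOn, ← transpose_submatrix,
    rank_transpose]

theorem IsSymm.rankOn_comm [Finite n] {M : Matrix n n F} (hM : M.IsSymm) (R C : Set n) :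
    M.rankOn C R = M.rankOn R C := by
  rw [← rankOn_transpose, hM.eq]

end Matrix

theorem cutRankOn_eq_rankOn {V : Type*} [Fintype V] (G : SimpleGraph V) [DecidableRel G.Adj]
    (S X : Set V) : cutRankOn G S X = (G.adjMatrix (ZMod 2)).rankOn (X ∩ S) (S \ X) := by
  let : Fintype ↥(S \ X) := (Set.toFinite _).fintype
  rw [cutRankOn, ← Matrix.rank_submatrix_eq_rankOn]
  congr 1
  ext a b
  simp [SimpleGraph.adjMatrix_apply]

theorem cutRank_eq_rankOn {V : Type*} [Fintype V] (G : SimpleGraph V) [DecidableRel G.Adj]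
    (X : Set V) : cutRank G X = (G.adjMatrix (ZMod 2)).rankOn X Xᶜ := by
  rw [cutRank, cutRankOn_eq_rankOn, Set.inter_univ, Set.compl_eq_univ_sdiff]

/-- For a finite simple graph `G`, the pair `(V(G), ρ_G)` is a
connectivity system: the cut-rank is symmetric and submodular. -/
theorem stmt6 {V : Type*} [Fintype V] (G : SimpleGraph V) :
    (CR G).IsConnSys := by
  classical
  refine ⟨Set.finite_univ, fun X _ => ?_, fun X _ Y _ => ?_⟩
  · simp only [CR, ← Set.compl_eq_univ_sdiff, cutRank_eq_rankOn, compl_compl]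
    exact (G.isSymm_adjMatrix).rankOn_comm _ _
  · simp only [CR, cutRank_eq_rankOn]
    have := (G.adjMatrix (ZMod 2)).rankOn_inter_union_add_le X Y Xᶜ Yᶜ
    rwa [← Set.compl_inter, ← Set.compl_union] at this
end

section
/- Let G be a simple graph, v a vertex of G, and e an edge incident with v. Then at least one of the connectivity systems CR(G − v) and CR((G × e) − v) adheres to CR(G). -/
open Set

variable {α : Type*} {V : Type*}

/-!
Let `A` be the adjacency matrix of `G` over `𝔽₂` and `A[X, Y]` its submatrices. Gaussian
elimination on the entry `A u v = 1` shows that for `v ∉ X` the rank of `A[X ∪ {v}, V \ X]` is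
`ρ_{(G × uv) - v}(X) + 1`: the rows left after eliminating are those of the adjacency matrix of
`G × uv` up to row operations (transpose first if `u ∉ X`). Submodularity of
`(X, Y) ↦ rank A[X, Y]`, applied to `A[A, V - v - A]` and `A[C ∪ {v}, V \ C]`, then gives, for
partitions `(A, B)` and `(C, D)` of `V - v`,
`ρ_G(A ∩ C) + ρ_G(B ∩ D) ≤ ρ_{G - v}(A) + ρ_{(G × uv) - v}(C) + 1`.
If `CR(G - v)` does not adhere to `CR(G)`, some partition `(A, B)` has no good split; comparing
the inequality for `(A, B)` and for `(B, A)` shows that, for every partition `(C, D)`, the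
trace of `(A, B)` on `C` or on `D` is a good split for `CR((G × uv) - v)`.
-/

open Submodule Module

theorem Submodule.span_insert_image_sub_smul {R M ι : Type*} [Ring R] [AddCommGroup M]
    [Module R M] (a : M) (f : ι → M) (c : ι → R) (s : Set ι) :
    span R (insert a ((fun i => f i - c i • a) '' s)) = span R (insert a (f '' s)) := by
  apply le_antisymm <;> rw [span_le] <;> rintro g (rfl | ⟨i, hi, rfl⟩)
  · exact subset_span (mem_insert _ _)
  · exact sub_mem (subset_span (mem_insert_of_mem _ ⟨i, hi, rfl⟩))
      (smul_mem _ _ (subset_span (mem_insert _ _)))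
  · exact subset_span (mem_insert _ _)
  · rw [← sub_add_cancel (f i) (c i • a)]
    exact add_mem (subset_span (mem_insert_of_mem _ ⟨i, hi, rfl⟩))
      (smul_mem _ _ (subset_span (mem_insert _ _)))

section LinearAlgebra

variable {K M N : Type*} [Field K] [AddCommGroup M] [Module K M] [AddCommGroup N] [Module K N]

theorem Submodule.finrank_map_add_finrank_inf_ker [FiniteDimensional K M] (f : M →ₗ[K] N)
    (p : Submodule K M) :
    finrank K (p.map f) + finrank K ↥(p ⊓ LinearMap.ker f) = finrank K p := by
  have h := LinearMap.finrank_range_add_finrank_ker (f.domRestrict p)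
  rw [LinearMap.range_domRestrict, LinearMap.ker_domRestrict] at h
  rw [← h, ← Submodule.finrank_map_subtype_eq, Submodule.map_comap_subtype]

theorem Submodule.finrank_map_inf_add_finrank_map_sup_le [FiniteDimensional K M]
    {N₁ N₂ N₃ N₄ : Type*} [AddCommGroup N₁] [Module K N₁] [AddCommGroup N₂] [Module K N₂]
    [AddCommGroup N₃] [Module K N₃] [AddCommGroup N₄] [Module K N₄]
    {f₁ : M →ₗ[K] N₁} {f₂ : M →ₗ[K] N₂} {f₃ : M →ₗ[K] N₃} {f₄ : M →ₗ[K] N₄}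
    (h₃ : LinearMap.ker f₁ ⊓ LinearMap.ker f₂ ≤ LinearMap.ker f₃)
    (h₄ : LinearMap.ker f₁ ⊔ LinearMap.ker f₂ ≤ LinearMap.ker f₄) (p₁ p₂ : Submodule K M) :
    finrank K ((p₁ ⊓ p₂).map f₃) + finrank K ((p₁ ⊔ p₂).map f₄) ≤
      finrank K (p₁.map f₁) + finrank K (p₂.map f₂) := by
  have e₁ := finrank_map_add_finrank_inf_ker f₁ p₁
  have e₂ := finrank_map_add_finrank_inf_ker f₂ p₂
  have e₃ := finrank_map_add_finrank_inf_ker f₃ (p₁ ⊓ p₂)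
  have e₄ := finrank_map_add_finrank_inf_ker f₄ (p₁ ⊔ p₂)
  have hp := finrank_sup_add_finrank_inf_eq p₁ p₂
  have hk := finrank_sup_add_finrank_inf_eq (p₁ ⊓ LinearMap.ker f₁) (p₂ ⊓ LinearMap.ker f₂)
  have hinf : finrank K ↥((p₁ ⊓ LinearMap.ker f₁) ⊓ (p₂ ⊓ LinearMap.ker f₂)) ≤
      finrank K ↥(p₁ ⊓ p₂ ⊓ LinearMap.ker f₃) :=
    finrank_mono fun _ hx => ⟨⟨hx.1.1, hx.2.1⟩, h₃ ⟨hx.1.2, hx.2.2⟩⟩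
  have hsup : finrank K ↥((p₁ ⊓ LinearMap.ker f₁) ⊔ (p₂ ⊓ LinearMap.ker f₂)) ≤
      finrank K ↥((p₁ ⊔ p₂) ⊓ LinearMap.ker f₄) :=
    finrank_mono (le_inf (sup_le_sup inf_le_left inf_le_left)
      ((sup_le_sup inf_le_right inf_le_right).trans h₄))
  omega

theorem Submodule.finrank_span_insert_eq_add_one [FiniteDimensional K M] {w : M} {S : Set M}
    {e : M →ₗ[K] K} (hw : e w ≠ 0) (hS : S ⊆ LinearMap.ker e) :
    finrank K (span K (insert w S)) = finrank K (span K S) + 1 := by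
  have hdisj : (K ∙ w) ⊓ span K S = ⊥ := by
    refine eq_bot_iff.2 fun x ⟨hxw, hxS⟩ => ?_
    obtain ⟨c, rfl⟩ := mem_span_singleton.1 hxw
    have hc : c * e w = 0 := by simpa using (span_le.2 hS) hxS
    simp [(mul_eq_zero.1 hc).resolve_right hw]
  have h := finrank_sup_add_finrank_inf_eq (K ∙ w) (span K S)
  rw [hdisj, finrank_bot, add_zero,
    finrank_span_singleton fun h0 => hw (by rw [h0, map_zero])] at h
  rw [span_insert]
  omega

end LinearAlgebra

section SubRank

variable {K m n : Type*} [Field K]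

variable (K) in
def restrictₗ (C : Set n) : (n → K) →ₗ[K] (C → K) :=
  LinearMap.funLeft K K (↑)

@[simp]
theorem restrictₗ_apply (C : Set n) (g : n → K) (c : C) : restrictₗ K C g c = g c := rfl

theorem mem_ker_restrictₗ {C : Set n} {g : n → K} :
    g ∈ LinearMap.ker (restrictₗ K C) ↔ ∀ c ∈ C, g c = 0 := by
  simp [funext_iff]

theorem ker_restrictₗ_union (C₁ C₂ : Set n) :
    LinearMap.ker (restrictₗ K (C₁ ∪ C₂)) =
      LinearMap.ker (restrictₗ K C₁) ⊓ LinearMap.ker (restrictₗ K C₂) := by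
  ext g
  simp only [mem_inf, mem_ker_restrictₗ, mem_union, or_imp, forall_and]

theorem ker_restrictₗ_anti {C' C : Set n} (h : C' ⊆ C) :
    LinearMap.ker (restrictₗ K C) ≤ LinearMap.ker (restrictₗ K C') := fun _ hg =>
  mem_ker_restrictₗ.2 fun c hc => mem_ker_restrictₗ.1 hg c (h hc)

namespace Matrix

noncomputable def subRank (M : Matrix m n K) (R : Set m) (C : Set n) : ℕ :=
  finrank K (span K ((fun x => restrictₗ K C (M x)) '' R))

variable (M : Matrix m n K) (R : Set m) (C : Set n)

theorem subRank_eq_finrank_map :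
    M.subRank R C = finrank K ((span K ((fun x => M x) '' R)).map (restrictₗ K C)) := by
  rw [subRank, map_span, image_image]

theorem rank_submatrix_eq_subRank [Finite m] [Fintype C] :
    (M.submatrix ((↑) : R → m) ((↑) : C → n)).rank = M.subRank R C := by
  rw [rank_eq_finrank_span_row, subRank, image_eq_range]
  rfl

theorem subRank_transpose [Finite m] [Finite n] : Mᵀ.subRank C R = M.subRank R C := by
  have := Fintype.ofFinite R
  have := Fintype.ofFinite C
  rw [← rank_submatrix_eq_subRank, ← rank_submatrix_eq_subRank, ← transpose_submatrix,
    rank_transpose]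

theorem subRank_mono_right [Finite n] {C' : Set n} (h : C' ⊆ C) :
    M.subRank R C' ≤ M.subRank R C := by
  have hres : restrictₗ K C' = (LinearMap.funLeft K K (inclusion h)).comp (restrictₗ K C) := rfl
  rw [subRank_eq_finrank_map, subRank_eq_finrank_map, hres, map_comp]
  exact finrank_map_le _ _

theorem subRank_insert_le [Finite n] (a : m) : M.subRank (insert a R) C ≤ M.subRank R C + 1 := by
  have hrow : finrank K (K ∙ restrictₗ K C (M a)) ≤ 1 := by
    simpa using finrank_span_le_card ({restrictₗ K C (M a)} : Set (C → K))
  have := finrank_add_le_finrank_add_finrank (K ∙ restrictₗ K C (M a))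
    (span K ((fun x => restrictₗ K C (M x)) '' R))
  rw [subRank, subRank, image_insert_eq, span_insert]
  omega

theorem subRank_inter_add_subRank_union_le [Finite n] (R₁ R₂ : Set m) (C₁ C₂ : Set n) :
    M.subRank (R₁ ∩ R₂) (C₁ ∪ C₂) + M.subRank (R₁ ∪ R₂) (C₁ ∩ C₂) ≤
      M.subRank R₁ C₁ + M.subRank R₂ C₂ := by
  simp only [subRank_eq_finrank_map]
  rw [image_union, span_union]
  have hinter : span K ((fun x => M x) '' (R₁ ∩ R₂)) ≤
      span K ((fun x => M x) '' R₁) ⊓ span K ((fun x => M x) '' R₂) :=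
    le_inf (span_mono (image_mono inter_subset_left)) (span_mono (image_mono inter_subset_right))
  have h := finrank_map_inf_add_finrank_map_sup_le (ker_restrictₗ_union (K := K) C₁ C₂).ge
    (sup_le (ker_restrictₗ_anti inter_subset_left) (ker_restrictₗ_anti inter_subset_right))
    (span K ((fun x => M x) '' R₁)) (span K ((fun x => M x) '' R₂))
  have hmono := finrank_mono (map_mono (f := restrictₗ K (C₁ ∪ C₂)) hinter)
  omega

theorem subRank_insert_right_of_forall_eq_zero [Finite n] {b : n} (hb : ∀ x ∈ R, M x b = 0) :
    M.subRank R (insert b C) = M.subRank R C := by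
  simp only [subRank_eq_finrank_map]
  set p := span K ((fun x => M x) '' R)
  have hp : p ≤ LinearMap.ker (LinearMap.proj (R := K) (φ := fun _ : n => K) b) :=
    span_le.2 (by rintro _ ⟨x, hx, rfl⟩; exact hb x hx)
  have hker : p ⊓ LinearMap.ker (restrictₗ K (insert b C)) = p ⊓ LinearMap.ker (restrictₗ K C) := by
    ext g
    simp only [mem_inf, mem_ker_restrictₗ, forall_mem_insert, and_congr_right_iff]
    exact fun hg => and_iff_right (hp hg)
  have e₁ := finrank_map_add_finrank_inf_ker (restrictₗ K (insert b C)) p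
  have e₂ := finrank_map_add_finrank_inf_ker (restrictₗ K C) p
  rw [hker] at e₁
  omega

theorem subRank_eq_subRank_sub_add_one [Finite n] {a : m} {b : n} (ha : a ∈ R) (hb : b ∈ C)
    (hab : M a b ≠ 0) :
    M.subRank R C =
      (of fun x y => M x y - M x b * (M a b)⁻¹ * M a y).subRank (R \ {a}) (C \ {b}) + 1 := by
  generalize hNdef : (of fun x y => M x y - M x b * (M a b)⁻¹ * M a y : Matrix m n K) = N
  have hN : ∀ x y, N x y = M x y - M x b * (M a b)⁻¹ * M a y := fun x y => by rw [← hNdef]; rfl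
  set r := fun x => restrictₗ K C (M x)
  have hNr : ∀ x, restrictₗ K C (N x) = r x - (M x b * (M a b)⁻¹) • r a := fun x => by
    funext y
    simp only [restrictₗ_apply, Pi.sub_apply, Pi.smul_apply, smul_eq_mul, hN, r, mul_assoc]
  have hNb : ∀ x, N x b = 0 := fun x => by
    rw [hN, mul_assoc, inv_mul_cancel₀ hab, mul_one, sub_self]
  have hNrows : N.subRank (R \ {a}) C =
      finrank K (span K ((fun x => r x - (M x b * (M a b)⁻¹) • r a) '' (R \ {a}))) := by
    rw [subRank, image_congr fun x _ => hNr x]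
  calc M.subRank R C = finrank K (span K
        (insert (r a) ((fun x => r x - (M x b * (M a b)⁻¹) • r a) '' (R \ {a})))) := by
        rw [span_insert_image_sub_smul, ← image_insert_eq, insert_sdiff_self_of_mem ha]
        rfl
    _ = N.subRank (R \ {a}) C + 1 := by
        rw [hNrows]
        refine finrank_span_insert_eq_add_one (e := LinearMap.proj ⟨b, hb⟩)
          (by simpa [r] using hab) ?_
        rintro _ ⟨x, -, rfl⟩
        simpa [← hNr] using hNb x
    _ = N.subRank (R \ {a}) (C \ {b}) + 1 := by
        rw [← subRank_insert_right_of_forall_eq_zero N _ (C \ {b}) (fun x _ => hNb x),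
          insert_sdiff_self_of_mem hb]

theorem subRank_insert_eq_of_eq_sub_smul {M' : Matrix m n K} {a a' : m} (c : m → K)
    (ha : ∀ y ∈ C, M' a' y = M a y) (hR : ∀ x ∈ R, ∀ y ∈ C, M' x y = M x y - c x * M a y) :
    M'.subRank (insert a' R) C = M.subRank (insert a R) C := by
  have ha' : restrictₗ K C (M' a') = restrictₗ K C (M a) := funext fun y => ha y y.2
  have hR' : ∀ x ∈ R, restrictₗ K C (M' x) = restrictₗ K C (M x) - c x • restrictₗ K C (M a) :=
    fun x hx => funext fun y => hR x hx y y.2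
  rw [subRank, subRank, image_insert_eq, image_insert_eq, ha', image_congr hR',
    span_insert_image_sub_smul _ (fun x => restrictₗ K C (M x))]

end Matrix

end SubRank

theorem adheres_or_adheres_of_lam_inter_add_lam_inter_le {K K₁ K₂ : PreSys α}
    (h₁ : Dominates K K₁) (h₂ : Dominates K K₂) (hE : K₂.E = K₁.E)
    (hsymm : ∀ A B, A ∪ B = K₁.E → Disjoint A B → K₁.lam B = K₁.lam A)
    (hlam : ∀ A B C D, A ∪ B = K₁.E → Disjoint A B → C ∪ D = K₁.E → Disjoint C D →
      K.lam (A ∩ C) + K.lam (B ∩ D) ≤ K₁.lam A + K₂.lam C + 1) :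
    Adheres K₁ K ∨ Adheres K₂ K := by
  refine or_iff_not_imp_left.2 fun hnot => ⟨h₂, fun C D hCD hCDd => ?_⟩
  obtain ⟨A, B, hAB, hABd, hbad⟩ : ∃ A B, A ∪ B = K₁.E ∧ Disjoint A B ∧
      ∀ X₁ X₂, Disjoint X₁ X₂ → (X₁ ∪ X₂ = A ∨ X₁ ∪ X₂ = B) →
        K.lam X₁ ≤ K₁.lam A → K₁.lam A < K.lam X₂ := by
    simpa [Adheres, h₁] using hnot
  rw [hE] at hCD
  have hsplit : ∀ {X}, X ⊆ K₁.E → X ∩ C ∪ X ∩ D = X := fun hX => by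
    rw [← inter_union_distrib_left, hCD, inter_eq_left.2 hX]
  have hA := hbad _ _ (hCDd.mono inter_subset_right inter_subset_right)
    (.inl (hsplit (hAB ▸ subset_union_left)))
  have hB := hbad _ _ (hCDd.mono inter_subset_right inter_subset_right)
    (.inr (hsplit (hAB ▸ subset_union_right)))
  have hAC := hlam A B C D hAB hABd hCD hCDd
  have hBC := hlam B A C D (union_comm A B ▸ hAB) hABd.symm hCD hCDd
  rw [hsymm A B hAB hABd] at hBC
  have hpieces : ∀ {Y}, Y ⊆ K₁.E → A ∩ Y ∪ B ∩ Y = Y := fun hY => by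
    rw [← union_inter_distrib_right, hAB, inter_eq_right.2 hY]
  by_cases hCside : K.lam (A ∩ C) ≤ K₂.lam C ∧ K.lam (B ∩ C) ≤ K₂.lam C
  · exact ⟨A ∩ C, B ∩ C, hABd.mono inter_subset_left inter_subset_left,
      .inl (hpieces (hCD ▸ subset_union_left)), hCside⟩
  · refine ⟨A ∩ D, B ∩ D, hABd.mono inter_subset_left inter_subset_left,
      .inr (hpieces (hCD ▸ subset_union_right)), ?_, ?_⟩ <;> omega

section Pivot

open Matrix SimpleGraph
open scoped Classical

theorem adjMatrix_localComp (G : SimpleGraph V) (w a b : V) :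
    (localComp G w).adjMatrix (ZMod 2) a b = if a = b then 0 else
      G.adjMatrix (ZMod 2) a b + G.adjMatrix (ZMod 2) w a * G.adjMatrix (ZMod 2) w b := by
  by_cases hab : a = b
  · simp [hab]
  · by_cases h₁ : G.Adj a b <;> by_cases h₂ : G.Adj w a <;> by_cases h₃ : G.Adj w b <;>
      simp [localComp, hab, h₁, h₂, h₃, CharTwo.add_self_eq_zero]

variable {G : SimpleGraph V} {u v : V}

theorem adjMatrix_pivot_left (he : G.Adj u v) {y : V} (hyu : y ≠ u) (hyv : y ≠ v) :
    (pivot G u v).adjMatrix (ZMod 2) u y = G.adjMatrix (ZMod 2) v y := by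
  have h2 : (2 : ZMod 2) = 0 := rfl
  have hAuv : G.adjMatrix (ZMod 2) u v = 1 := by simp [he]
  have hAvu : G.adjMatrix (ZMod 2) v u = 1 := by simp [he.symm]
  have hAww : ∀ w, G.adjMatrix (ZMod 2) w w = 0 := by simp
  -- `rw` also unfolds `pivot` inside the `DecidableRel` instance, where `simp` cannot.
  rw [pivot]
  simp only [adjMatrix_localComp, he.ne.symm, hyu.symm, hyv.symm, if_true, if_false,
    hAuv, hAvu, hAww]
  linear_combination G.adjMatrix (ZMod 2) u y * h2

theorem adjMatrix_pivot_of_ne (he : G.Adj u v) {x y : V} (hxu : x ≠ u) (hxv : x ≠ v)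
    (hyu : y ≠ u) (hyv : y ≠ v) :
    (pivot G u v).adjMatrix (ZMod 2) x y = G.adjMatrix (ZMod 2) x y +
      G.adjMatrix (ZMod 2) u x * G.adjMatrix (ZMod 2) v y +
      G.adjMatrix (ZMod 2) v x * G.adjMatrix (ZMod 2) u y := by
  have h2 : (2 : ZMod 2) = 0 := rfl
  have hAuv : G.adjMatrix (ZMod 2) u v = 1 := by simp [he]
  have hAvu : G.adjMatrix (ZMod 2) v u = 1 := by simp [he.symm]
  have hAww : ∀ w, G.adjMatrix (ZMod 2) w w = 0 := by simp
  by_cases hxy : x = y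
  · subst hxy
    rw [hAww, show (pivot G u v).adjMatrix (ZMod 2) x x = 0 by simp]
    linear_combination (-G.adjMatrix (ZMod 2) u x * G.adjMatrix (ZMod 2) v x) * h2
  rw [pivot]
  simp only [adjMatrix_localComp, he.ne.symm, hyu.symm, hyv.symm, hxu.symm, hxv.symm, hxy,
    if_false, hAuv, hAvu, hAww]
  linear_combination (3 * G.adjMatrix (ZMod 2) u x * G.adjMatrix (ZMod 2) u y +
    G.adjMatrix (ZMod 2) v x * G.adjMatrix (ZMod 2) v y +
    G.adjMatrix (ZMod 2) v x * G.adjMatrix (ZMod 2) u y +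
    G.adjMatrix (ZMod 2) u x * G.adjMatrix (ZMod 2) v y) * h2

theorem subRank_adjMatrix_insert_insert [Finite V] (he : G.Adj u v) {Y D : Set V} (huY : u ∈ Y)
    (hvY : v ∉ Y) (huD : u ∉ D) (hvD : v ∉ D) :
    (G.adjMatrix (ZMod 2)).subRank (insert v Y) (insert v D) =
      ((pivot G u v).adjMatrix (ZMod 2)).subRank Y D + 1 := by
  have h2 : (2 : ZMod 2) = 0 := rfl
  have hAuv : G.adjMatrix (ZMod 2) u v = 1 := by simp [he]
  have hAvv : G.adjMatrix (ZMod 2) v v = 0 := by simp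
  rw [subRank_eq_subRank_sub_add_one _ _ _ (mem_insert_of_mem v huY) (mem_insert v D)
    (by rw [hAuv]; exact one_ne_zero), insert_sdiff_of_notMem _ (by simpa using he.ne.symm),
    insert_sdiff_self_of_notMem hvD]
  conv_rhs => rw [← insert_sdiff_self_of_mem huY]
  congr 1
  -- After eliminating with the pivot entry `A u v = 1`, row `v` is row `u` of the pivoted
  -- matrix and each other row is the pivoted row minus a multiple of that row.
  refine subRank_insert_eq_of_eq_sub_smul _ _ _ (fun x => G.adjMatrix (ZMod 2) u x)
    (fun y hy => ?_) (fun x hx y hy => ?_)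
  · rw [of_apply, hAvv, zero_mul, zero_mul, sub_zero,
      adjMatrix_pivot_left he (ne_of_mem_of_not_mem hy huD) (ne_of_mem_of_not_mem hy hvD)]
  · have hyu : y ≠ u := ne_of_mem_of_not_mem hy huD
    have hyv : y ≠ v := ne_of_mem_of_not_mem hy hvD
    rw [of_apply, hAuv, inv_one, mul_one, adjMatrix_pivot_left he hyu hyv,
      adjMatrix_pivot_of_ne he hx.2 (ne_of_mem_of_not_mem hx.1 hvY) hyu hyv,
      G.isSymm_adjMatrix.apply v x]
    linear_combination (-(G.adjMatrix (ZMod 2) v x * G.adjMatrix (ZMod 2) u y)) * h2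

end Pivot

section CutRank

open Matrix SimpleGraph
open scoped Classical

variable [Fintype V] (G : SimpleGraph V)

theorem cutRankOn_eq_subRank (S X : Set V) :
    cutRankOn G S X = (G.adjMatrix (ZMod 2)).subRank (X ∩ S) (S \ X) := by
  let _ : Fintype ↥(S \ X) := (Set.toFinite _).fintype
  rw [cutRankOn, ← rank_submatrix_eq_subRank]
  rfl

theorem cutRank_eq_subRank (X : Set V) : cutRank G X = (G.adjMatrix (ZMod 2)).subRank X Xᶜ := by
  rw [cutRank, cutRankOn_eq_subRank, inter_univ, compl_eq_univ_sdiff]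

theorem cutRankOn_sdiff (S X : Set V) : cutRankOn G S (S \ X) = cutRankOn G S X := by
  rw [cutRankOn_eq_subRank, cutRankOn_eq_subRank, ← subRank_transpose, transpose_adjMatrix,
    sdiff_sdiff_right_self, inter_comm, inter_eq_left.2 sdiff_subset]

theorem cutRank_compl (X : Set V) : cutRank G Xᶜ = cutRank G X := by
  simpa only [cutRank, compl_eq_univ_sdiff] using cutRankOn_sdiff G univ X

theorem cutRankOn_le_cutRank {S X : Set V} (hX : X ⊆ S) : cutRankOn G S X ≤ cutRank G X := by
  rw [cutRankOn_eq_subRank, cutRank_eq_subRank, inter_eq_left.2 hX]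
  exact subRank_mono_right _ _ _ fun _ hx => hx.2

theorem dominates_CR_CRdel (v : V) : Dominates (CR G) (CRdel G v) :=
  ⟨subset_univ _, fun _ hX => cutRankOn_le_cutRank G hX⟩

variable {G} {u v : V}

theorem subRank_adjMatrix_insert_compl (he : G.Adj u v) {X : Set V} (hvX : v ∉ X) :
    (G.adjMatrix (ZMod 2)).subRank (insert v X) Xᶜ = cutRankOn (pivot G u v) {v}ᶜ X + 1 := by
  have hXc : Xᶜ = insert v ({v}ᶜ \ X) := by grind
  have hvD : v ∉ {v}ᶜ \ X := fun h => h.1 rfl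
  rw [cutRankOn_eq_subRank, inter_eq_left.2 (subset_compl_singleton_iff.2 hvX), hXc]
  by_cases hu : u ∈ X
  · exact subRank_adjMatrix_insert_insert he hu hvX (fun h => h.2 hu) hvD
  · rw [← subRank_transpose, transpose_adjMatrix, subRank_adjMatrix_insert_insert he
      (show u ∈ {v}ᶜ \ X from ⟨he.ne, hu⟩) hvD hu hvX]
    congr 1
    rw [← subRank_transpose, transpose_adjMatrix]

theorem dominates_CR_CRdel_pivot (he : G.Adj u v) :
    Dominates (CR G) (CRdel (pivot G u v) v) := by
  refine ⟨subset_univ _, fun X hX => ?_⟩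
  have := (G.adjMatrix (ZMod 2)).subRank_insert_le X Xᶜ v
  rw [subRank_adjMatrix_insert_compl he fun h => hX h rfl, ← cutRank_eq_subRank] at this
  exact Nat.le_of_add_le_add_right this

theorem cutRank_inter_add_cutRank_insert_union_le (he : G.Adj u v) {A C : Set V} (hvA : v ∉ A)
    (hvC : v ∉ C) :
    cutRank G (A ∩ C) + cutRank G (insert v (A ∪ C)) ≤
      cutRankOn G {v}ᶜ A + cutRankOn (pivot G u v) {v}ᶜ C + 1 := by
  have h := (G.adjMatrix (ZMod 2)).subRank_inter_add_subRank_union_le A (insert v C)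
    ({v}ᶜ \ A) Cᶜ
  have hcols : {v}ᶜ \ A ∪ Cᶜ = (A ∩ C)ᶜ := by grind
  have hcols' : {v}ᶜ \ A ∩ Cᶜ = (insert v (A ∪ C))ᶜ := by grind
  rw [subRank_adjMatrix_insert_compl he hvC, inter_insert_of_notMem hvA, union_insert, hcols,
    hcols', ← cutRank_eq_subRank, ← cutRank_eq_subRank] at h
  rwa [cutRankOn_eq_subRank, inter_eq_left.2 (subset_compl_singleton_iff.2 hvA)]

theorem cutRank_inter_add_cutRank_inter_le (he : G.Adj u v) {A B C D : Set V}
    (hAB : A ∪ B = {v}ᶜ) (hABd : Disjoint A B) (hCD : C ∪ D = {v}ᶜ) (hCDd : Disjoint C D) :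
    cutRank G (A ∩ C) + cutRank G (B ∩ D) ≤
      cutRankOn G {v}ᶜ A + cutRankOn (pivot G u v) {v}ᶜ C + 1 := by
  have hBD : B ∩ D = (insert v (A ∪ C))ᶜ := by
    rw [← hABd.sdiff_eq_of_sup_eq hAB, ← hCDd.sdiff_eq_of_sup_eq hCD]
    grind
  rw [hBD, cutRank_compl]
  exact cutRank_inter_add_cutRank_insert_union_le he
    (subset_compl_singleton_iff.1 (hAB ▸ subset_union_left))
    (subset_compl_singleton_iff.1 (hCD ▸ subset_union_left))

end CutRank

/-- For a vertex `v` of a simple graph `G` and an edge `e = uv`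
incident with `v`, at least one of `CR(G - v)` and `CR((G × e) - v)` adheres to
`CR(G)`. -/
theorem stmt8 {V : Type*} [Fintype V] (G : SimpleGraph V) (u v : V) (he : G.Adj u v) :
    Adheres (CRdel G v) (CR G) ∨ Adheres (CRdel (pivot G u v) v) (CR G) :=
  adheres_or_adheres_of_lam_inter_add_lam_inter_le (dominates_CR_CRdel G v)
    (dominates_CR_CRdel_pivot he) rfl
    (fun _ _ hAB hABd => by rw [← hABd.sdiff_eq_of_sup_eq hAB]; exact cutRankOn_sdiff G _ _)
    (fun _ _ _ _ => cutRank_inter_add_cutRank_inter_le he)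
end

section
/- Let K = (E, λ) be a connectivity system, let T be a tangle of order k in K, and let X ⊆ E be weakly (λ(X))-branched with λ(X) < k. Then X ∈ T. (Every weakly (k−1)-branched set is contained in every tangle of order at least k.) -/
open Set

variable {α : Type*} {V : Type*}

/-!
Orient every edge of the decomposition tree towards the side that lies in `T`; this is
possible because every edge side has connectivity at most `λ(X) < k`. A finite tree oriented
this way has a sink `x`. If `X ∉ T` then `E \ X ∈ T`, and `x` gives a contradiction: if `x` has
degree three, the sides of its three edges are in `T` and cover `E`; if `x` is a leaf displaying
a subset of `E \ X`, its edge side together with `E \ X` covers `E`; if it displays a singleton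
`{a}`, its edge side `E \ {a}` is a member of `T` of size `|E| - 1`.
-/

namespace SimpleGraph

variable {G : SimpleGraph V} {u v w x y : V}

lemma Reachable.deleteEdge_reachable_or (h : G.Reachable y w) (u : V) :
    (G.deleteEdges {s(u, w)}).Reachable y u ∨ (G.deleteEdges {s(u, w)}).Reachable y w := by
  obtain ⟨p⟩ := h
  induction p with
  | nil => exact Or.inr Reachable.rfl
  | @cons a b c hab q ih =>
    by_cases he : s(a, b) = s(u, c)
    · rcases Sym2.eq_iff.mp he with ⟨rfl, rfl⟩ | ⟨rfl, rfl⟩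
      · exact Or.inl Reachable.rfl
      · exact Or.inr Reachable.rfl
    · have hab' : (G.deleteEdges {s(u, c)}).Adj a b := deleteEdges_adj.mpr ⟨hab, he⟩
      exact ih.imp hab'.reachable.trans hab'.reachable.trans

lemma IsAcyclic.not_reachable_deleteEdge (hG : G.IsAcyclic) (h : G.Adj u w) :
    ¬ (G.deleteEdges {s(u, w)}).Reachable u w :=
  isBridge_iff.mp (isAcyclic_iff_forall_adj_isBridge.mp hG h)

lemma IsAcyclic.reachable_deleteEdge_of_adj (hG : G.IsAcyclic) (hux : G.Adj u x) (hvu : v ≠ u)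
    (hy : (G.deleteEdges {s(u, x)}).Reachable y u) :
    (G.deleteEdges {s(x, v)}).Reachable y x := by
  classical
  obtain ⟨p, hp⟩ := reachable_deleteEdges_iff_exists_walk.mp hy
  have hxp : x ∉ p.support := fun hx =>
    hG.not_reachable_deleteEdge hux <| Reachable.symm <|
      reachable_deleteEdges_iff_exists_walk.mpr
        ⟨p.dropUntil x hx, fun h => hp (p.edges_dropUntil_subset_edges hx h)⟩
  refine reachable_deleteEdges_iff_exists_walk.mpr ⟨p.concat hux, fun h => ?_⟩
  rw [Walk.edges_concat, List.concat_eq_append, List.mem_append, List.mem_singleton,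
    Sym2.eq_iff] at h
  rcases h with h | ⟨rfl, -⟩ | ⟨-, rfl⟩
  · exact hxp (p.fst_mem_support_of_mem_edges h)
  · exact hux.ne rfl
  · exact hvu rfl

lemma Connected.exists_adj_reachable_deleteEdge (hG : G.Connected) (hyx : y ≠ x) :
    ∃ v, G.Adj v x ∧ (G.deleteEdges {s(v, x)}).Reachable y v := by
  classical
  obtain ⟨p, hp⟩ := (hG.preconnected x y).some.toPath
  cases p with
  | nil => exact absurd rfl hyx
  | @cons _ v _ hxv r =>
    refine ⟨v, hxv.symm, Reachable.symm <| reachable_deleteEdges_iff_exists_walk.mpr ⟨r, ?_⟩⟩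
    exact fun h => (Walk.cons_isPath_iff _ _).mp hp |>.2 (r.snd_mem_support_of_mem_edges h)

lemma IsTree.exists_sink [Finite V] (hG : G.IsTree) {P : V → V → Prop}
    (hP : ∀ ⦃u w⦄, G.Adj u w → P u w ∨ P w u) : ∃ x, ∀ v, G.Adj v x → P v x := by
  by_cases hE : ∃ p : V × V, G.Adj p.1 p.2 ∧ P p.1 p.2
  swap
  · obtain ⟨x⟩ := hG.connected.nonempty
    exact ⟨x, fun v hvx => (hP hvx).resolve_right fun h => hE ⟨(x, v), hvx.symm, h⟩⟩
  -- Take an oriented edge `ux` with the largest `u`-side; then `x` is a sink.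
  obtain ⟨⟨u, x⟩, ⟨hux, hPux⟩, hmax⟩ := Set.exists_max_image
    {p : V × V | G.Adj p.1 p.2 ∧ P p.1 p.2}
    (fun p => {y | (G.deleteEdges {s(p.1, p.2)}).Reachable y p.1}.ncard) (Set.toFinite _) hE
  refine ⟨x, fun v hvx => by_contra fun hPvx => ?_⟩
  have hPxv : P x v := (hP hvx).resolve_left hPvx
  have hvu : v ≠ u := by rintro rfl; exact hPvx hPux
  have hlt : {y | (G.deleteEdges {s(u, x)}).Reachable y u}.ncard <
      {y | (G.deleteEdges {s(x, v)}).Reachable y x}.ncard := by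
    refine Set.ncard_lt_ncard ⟨fun y hy => hG.isAcyclic.reachable_deleteEdge_of_adj hux hvu hy,
      fun hsub => ?_⟩ (Set.toFinite _)
    exact hG.isAcyclic.not_reachable_deleteEdge hux (hsub Reachable.rfl).symm
  exact (hmax (x, v) ⟨hvx.symm, hPxv⟩).not_gt hlt

end SimpleGraph

section edgeSide

variable {K : PreSys α} {tr : SimpleGraph V} {f : α → V} {a : α} {u v w x : V}

lemma edgeSide_subset : edgeSide K tr f u w ⊆ K.E := fun _ ha => ha.1

lemma edgeSide_swap (htr : tr.IsTree) (h : tr.Adj u w) :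
    edgeSide K tr f w u = K.E \ edgeSide K tr f u w := by
  simp only [edgeSide, Sym2.eq_swap (a := w)]
  ext a
  refine ⟨fun ⟨ha, hw⟩ => ⟨ha, fun ⟨_, hu⟩ => ?_⟩, fun ⟨ha, hu⟩ => ⟨ha, ?_⟩⟩
  · exact htr.isAcyclic.not_reachable_deleteEdge h (hu.symm.trans hw)
  · exact ((htr.connected.preconnected (f a) w).deleteEdge_reachable_or u).resolve_left
      fun h => hu ⟨ha, h⟩

lemma notMem_edgeSide_of_eq (htr : tr.IsAcyclic) (h : tr.Adj v x) (ha : f a = x) :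
    a ∉ edgeSide K tr f v x := fun hav =>
  htr.not_reachable_deleteEdge h (ha ▸ hav.2).symm

lemma exists_mem_edgeSide_of_ne (htr : tr.Connected) (ha : a ∈ K.E) (hx : f a ≠ x) :
    ∃ v, tr.Adj v x ∧ a ∈ edgeSide K tr f v x := by
  obtain ⟨v, hvx, hv⟩ := htr.exists_adj_reachable_deleteEdge hx
  exact ⟨v, hvx, ha, hv⟩

lemma edgeSide_eq_sdiff_display_of_neighborSet_eq (htr : tr.IsTree)
    (hx : tr.neighborSet x = {u}) : edgeSide K tr f u x = K.E \ display K f x := by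
  have hux : tr.Adj u x := (show u ∈ tr.neighborSet x from hx ▸ rfl).symm
  refine Set.Subset.antisymm (fun a ha => ⟨ha.1, fun had => ?_⟩) fun a ⟨ha, had⟩ => ?_
  · exact notMem_edgeSide_of_eq htr.isAcyclic hux had.2 ha
  · obtain ⟨v, hvx, hav⟩ := exists_mem_edgeSide_of_ne htr.connected ha fun h => had ⟨ha, h⟩
    have hv : v ∈ tr.neighborSet x := hvx.symm
    rw [hx, Set.mem_singleton_iff] at hv
    exact hv ▸ hav

lemma PBD.exists_ground_subset_union_edgeSide (D : PBD K V)
    (hx : (D.tree.neighborSet x).ncard = 3) : ∃ v₁ v₂ v₃, D.tree.Adj v₁ x ∧ D.tree.Adj v₂ x ∧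
      D.tree.Adj v₃ x ∧ K.E ⊆ edgeSide K D.tree D.f v₁ x ∪ edgeSide K D.tree D.f v₂ x ∪
        edgeSide K D.tree D.f v₃ x := by
  obtain ⟨v₁, v₂, v₃, -, -, -, hnb⟩ := Set.ncard_eq_three.mp hx
  have hadj : ∀ v ∈ ({v₁, v₂, v₃} : Set V), D.tree.Adj v x := fun v hv =>
    (show v ∈ D.tree.neighborSet x from hnb ▸ hv).symm
  refine ⟨v₁, v₂, v₃, hadj _ (by simp), hadj _ (by simp), hadj _ (by simp), fun b hb => ?_⟩
  have hbx : D.f b ≠ x := fun h => by simpa [h, hx] using D.maps b hb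
  obtain ⟨v, hvx, hbv⟩ := exists_mem_edgeSide_of_ne D.isTree.connected hb hbx
  have hv : v ∈ ({v₁, v₂, v₃} : Set V) := hnb ▸ hvx.symm
  rcases hv with rfl | rfl | rfl
  · exact Or.inl (Or.inl hbv)
  · exact Or.inl (Or.inr hbv)
  · exact Or.inr hbv

end edgeSide

namespace IsTangle

variable {K : PreSys α} {k t : ℕ} {T : Set (Set α)} {A B C : Set α}

lemma mem_or_sdiff_mem (hT : IsTangle K k T) (hA : A ⊆ K.E) (hlt : K.lam A < k) :
    A ∈ T ∨ K.E \ A ∈ T := by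
  by_contra! h
  exact h.1 ((hT.2.1 A hA hlt).mpr h.2)

lemma not_subset_union (hT : IsTangle K k T) (hA : A ∈ T) (hB : B ∈ T) (hC : C ∈ T) :
    ¬ K.E ⊆ A ∪ B ∪ C := fun h =>
  hT.2.2.1 A hA B hB C hC <| h.antisymm' <|
    Set.union_subset (Set.union_subset (hT.1 A hA).1 (hT.1 B hB).1) (hT.1 C hC).1

lemma sdiff_singleton_notMem (hT : IsTangle K k T) (ha : a ∈ K.E) : K.E \ {a} ∉ T := fun h =>
  hT.2.2.2 _ h (Set.ncard_sdiff_singleton_of_mem ha)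

lemma exists_sink [Finite V] (hT : IsTangle K k T) (D : PBD K V)
    (hw : widthLE K D.tree D.f t) (ht : t < k) :
    ∃ x, ∀ v, D.tree.Adj v x → edgeSide K D.tree D.f v x ∈ T :=
  D.isTree.exists_sink fun u w h => by
    rw [edgeSide_swap D.isTree h]
    exact hT.mem_or_sdiff_mem edgeSide_subset ((hw u w h).trans_lt ht)

end IsTangle

theorem stmt11_general {α : Type*} (K : PreSys α) (k : ℕ)
    (T : Set (Set α)) (hT : IsTangle K k T) (X : Set α) (hX : X ⊆ K.E)
    (hlam : K.lam X < k) (hb : WeaklyBranched K X (K.lam X)) :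
    X ∈ T := by
  obtain ⟨-, V, _, D, hw, hleaf⟩ := hb
  refine (hT.mem_or_sdiff_mem hX hlam).resolve_right fun hXc => ?_
  obtain ⟨x, hx⟩ := hT.exists_sink D hw hlam
  rcases D.cubic x with hdeg | hdeg
  · obtain ⟨u, hu⟩ := Set.ncard_eq_one.mp hdeg
    have hside := edgeSide_eq_sdiff_display_of_neighborSet_eq (f := D.f) (K := K) D.isTree hu
    have huT := hx u (show u ∈ D.tree.neighborSet x from hu ▸ rfl).symm
    rcases hleaf x hdeg with hsub | ⟨a, ha⟩
    · refine hT.not_subset_union huT hXc hXc fun b hb => ?_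
      by_cases hbx : b ∈ display K D.f x
      · exact Or.inr (hsub hbx)
      · exact Or.inl (Or.inl (hside ▸ ⟨hb, hbx⟩))
    · rw [hside, ha] at huT
      exact hT.sdiff_singleton_notMem (show a ∈ display K D.f x from ha ▸ rfl).1 huT
  · obtain ⟨v₁, v₂, v₃, h₁, h₂, h₃, hcover⟩ := D.exists_ground_subset_union_edgeSide hdeg
    exact hT.not_subset_union (hx v₁ h₁) (hx v₂ h₂) (hx v₃ h₃) hcover

/-- If `T` is a tangle of order `k` in a connectivity system `K` and
`X ⊆ E` is weakly `λ(X)`-branched with `λ(X) < k`, then `X ∈ T`. -/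
theorem stmt11 {α : Type*} (K : PreSys α) (hK : K.IsConnSys) (k : ℕ)
    (T : Set (Set α)) (hT : IsTangle K k T) (X : Set α) (hX : X ⊆ K.E)
    (hlam : K.lam X < k) (hb : WeaklyBranched K X (K.lam X)) :
    X ∈ T :=
  stmt11_general K k T hT X hX hlam hb
end

section
/- Let K = (E, λ) be a connectivity system, let (T, f) be a partial branch-decomposition of K, let r be a leaf displaying the set Y, and let X ⊆ E \ Y. Define f' by f'(x) = f(x) for x ∈ X and f'(x) = r otherwise. If λ(X) = κ_K(X, Y) (the minimum of λ(Z) over all Z with X ⊆ Z ⊆ E \ Y), then the width of every edge of T under (T, f') is at most its width under (T, f). -/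
open Set

variable {α : Type*} {V : Type*}

namespace PreSys

variable (K : PreSys α)

theorem kappa_le_lam {X Y Z : Set α} (hXZ : X ⊆ Z) (hZ : Z ⊆ K.E \ Y) :
    kappa K X Y ≤ K.lam Z :=
  Nat.sInf_le ⟨Z, hXZ, hZ, rfl⟩

/-- Uncrossing: `X ∪ B` is a competitor for `κ(X, Y)`, so `λ(X) ≤ λ(X ∪ B)`, and submodularity
transfers this to `λ(X ∩ B) ≤ λ(B)`. -/
theorem lam_inter_le_of_lam_eq_kappa
    (hsub : ∀ X ⊆ K.E, ∀ Y ⊆ K.E, K.lam (X ∩ Y) + K.lam (X ∪ Y) ≤ K.lam X + K.lam Y)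
    {X Y B : Set α} (hX : X ⊆ K.E \ Y) (hkap : K.lam X = kappa K X Y) (hB : B ⊆ K.E)
    (hBY : Disjoint B Y) : K.lam (X ∩ B) ≤ K.lam B := by
  have hunion : K.lam X ≤ K.lam (X ∪ B) :=
    hkap ▸ K.kappa_le_lam subset_union_left (union_subset hX (subset_sdiff.2 ⟨hB, hBY⟩))
  have := hsub X (hX.trans sdiff_subset) B hB
  omega

section Remap

variable {tr : SimpleGraph V} {f : α → V} {r u w : V} {X : Set α} [DecidablePred (· ∈ X)]

theorem edgeSide_subset : edgeSide K tr f u w ⊆ K.E := fun _ ha => ha.1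

theorem disjoint_edgeSide_display (hru : ¬(tr.deleteEdges {s(u, w)}).Reachable r u) :
    Disjoint (edgeSide K tr f u w) (display K f r) :=
  disjoint_left.2 fun _ ha hr => hru (hr.2 ▸ ha.2)

theorem display_subset_edgeSide (hru : (tr.deleteEdges {s(u, w)}).Reachable r u) :
    display K f r ⊆ edgeSide K tr f u w :=
  fun _ ha => ⟨ha.1, ha.2 ▸ hru⟩

theorem edgeSide_ite_of_not_reachable (hru : ¬(tr.deleteEdges {s(u, w)}).Reachable r u) :
    edgeSide K tr (fun a => if a ∈ X then f a else r) u w = X ∩ edgeSide K tr f u w := by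
  ext a
  by_cases ha : a ∈ X <;> simp [edgeSide, ha, hru]

theorem diff_edgeSide_ite_of_reachable (hru : (tr.deleteEdges {s(u, w)}).Reachable r u) :
    K.E \ edgeSide K tr (fun a => if a ∈ X then f a else r) u w =
      X ∩ (K.E \ edgeSide K tr f u w) := by
  ext a
  by_cases ha : a ∈ X <;> simp [edgeSide, ha, hru]

end Remap

end PreSys

open Classical in
theorem stmt12_general {α : Type*} {V : Type*} (K : PreSys α) (hK : K.IsConnSys)
    (D : PBD K V) (r : V) (X : Set α)
    (hX : X ⊆ K.E \ display K D.f r)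
    (hkap : K.lam X = kappa K X (display K D.f r)) :
    ∀ u w : V, D.tree.Adj u w →
      K.lam (edgeSide K D.tree (fun a => if a ∈ X then D.f a else r) u w) ≤
        K.lam (edgeSide K D.tree D.f u w) := by
  intro u w _
  obtain ⟨-, hsym, hsub⟩ := hK
  set A := edgeSide K D.tree D.f u w
  by_cases hru : (D.tree.deleteEdges {s(u, w)}).Reachable r u
  · have hAc : Disjoint (K.E \ A) (display K D.f r) :=
      disjoint_sdiff_left.mono_right (K.display_subset_edgeSide hru)
    calc _ = K.lam (K.E \ edgeSide K D.tree (fun a => if a ∈ X then D.f a else r) u w) :=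
          hsym _ K.edgeSide_subset
      _ = K.lam (X ∩ (K.E \ A)) := by rw [K.diff_edgeSide_ite_of_reachable hru]
      _ ≤ K.lam (K.E \ A) := K.lam_inter_le_of_lam_eq_kappa hsub hX hkap sdiff_subset hAc
      _ = K.lam A := (hsym A K.edgeSide_subset).symm
  · rw [K.edgeSide_ite_of_not_reachable hru]
    exact K.lam_inter_le_of_lam_eq_kappa hsub hX hkap K.edgeSide_subset
      (K.disjoint_edgeSide_display hru)

open Classical in
/-- Re-mapping lemma. If `r` is a leaf of a partial
branch-decomposition displaying `Y`, `X ⊆ E \ Y` and `λ(X) = κ_K(X, Y)`, then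
re-mapping every element outside `X` to `r` does not increase any edge width. -/
theorem stmt12 {α : Type*} {V : Type*} [Fintype V] (K : PreSys α) (hK : K.IsConnSys)
    (D : PBD K V) (r : V) (hr : D.IsLeaf r) (X : Set α)
    (hX : X ⊆ K.E \ display K D.f r)
    (hkap : K.lam X = kappa K X (display K D.f r)) :
    ∀ u w : V, D.tree.Adj u w →
      K.lam (edgeSide K D.tree (fun a => if a ∈ X then D.f a else r) u w) ≤
        K.lam (edgeSide K D.tree D.f u w) :=
  stmt12_general K hK D r X hX hkap
end
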